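/- arXiv:2604.13005 — 2 statements merged into one kernel-verified Lean document; each statement's English description precedes it below -/
import Mathlib

section
/- Let G be a graph on n vertices whose graph obtained by removing all universal vertices is isomorphic to the disjoint union K₃ + K₁ of a triangle and an isolated vertex, and let k ≤ n − 1. Then B_{≥k}(G) is isomorphic to the complete graph K₄. -/
/-! Away from the isolated vertex `d` of `K₃ + K₁` any two vertices are adjacent, since a
universal vertex is adjacent to everything. So in a partition into independent sets every vertex
other than `d` has a part of its own, except possibly one non-neighbour of `d` sharing `d`'s part.
The independent partitions are therefore the discrete one and the three that pair `d` with a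
triangle vertex; each has at least `n - 1` parts, and any two differ only in where `d` sits. -/

open Finset

variable {V : Type*} [Fintype V] [DecidableEq V]

def IsISP (G : SimpleGraph V) (P : Finpartition (univ : Finset V)) : Prop :=
  ∀ A ∈ P.parts, ∀ u ∈ A, ∀ v ∈ A, ¬ G.Adj u v

def samePart (P : Finpartition (univ : Finset V)) (u v : V) : Prop :=
  ∃ A ∈ P.parts, u ∈ A ∧ v ∈ A

def MovedBy (P Q : Finpartition (univ : Finset V)) (x : V) : Prop :=
  P ≠ Q ∧ ∀ u v : V, u ≠ x → v ≠ x → (samePart P u v ↔ samePart Q u v)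

def BellGraph (G : SimpleGraph V) :
    SimpleGraph {P : Finpartition (univ : Finset V) // IsISP G P} where
  Adj P Q := ∃ x, MovedBy P.1 Q.1 x
  symm := by
    constructor
    rintro P Q ⟨x, hne, h⟩
    exact ⟨x, Ne.symm hne, fun u v hu hv => (h u v hu hv).symm⟩
  loopless := by
    constructor
    rintro P ⟨x, hne, _⟩
    exact hne rfl

def UpperBell (G : SimpleGraph V) (k : ℕ) :
    SimpleGraph {P : Finpartition (univ : Finset V) // IsISP G P ∧ k ≤ P.parts.card} where
  Adj P Q := ∃ x, MovedBy P.1 Q.1 x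
  symm := by
    constructor
    rintro P Q ⟨x, hne, h⟩
    exact ⟨x, Ne.symm hne, fun u v hu hv => (h u v hu hv).symm⟩
  loopless := by
    constructor
    rintro P ⟨x, hne, _⟩
    exact hne rfl

def IsUniversal (G : SimpleGraph V) (v : V) : Prop :=
  ∀ w, w ≠ v → G.Adj v w

def K3plusK1 : SimpleGraph (Fin 4) where
  Adj a b := a ≠ b ∧ a ≠ 3 ∧ b ≠ 3
  symm := by constructor; rintro a b ⟨h1, h2, h3⟩; exact ⟨h1.symm, h3, h2⟩
  loopless := by constructor; rintro a ⟨h, _⟩; exact h rfl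

namespace Finpartition

variable {α : Type*} [DecidableEq α] {s : Finset α}

theorem parts_eq_image_part (P : Finpartition s) : P.parts = s.image P.part := by
  ext A
  refine ⟨fun hA => ?_, fun hA => ?_⟩
  · obtain ⟨a, ha, rfl⟩ := P.part_surjOn hA
    exact mem_image_of_mem _ ha
  · obtain ⟨a, ha, rfl⟩ := mem_image.1 hA
    exact P.part_mem.2 ha

theorem ext_part {P Q : Finpartition s} (h : ∀ a ∈ s, P.part a = Q.part a) : P = Q := by
  ext1
  rw [parts_eq_image_part, parts_eq_image_part]
  exact image_congr h

end Finpartition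

section SamePart

variable {P Q : Finpartition (univ : Finset V)} {u v w : V}

theorem samePart_iff_mem_part : samePart P u v ↔ u ∈ P.part v :=
  P.mem_part_iff_exists.symm

theorem samePart_iff_part_eq : samePart P u v ↔ P.part u = P.part v :=
  samePart_iff_mem_part.trans (P.mem_part_iff_part_eq_part (mem_univ u) (mem_univ v))

theorem samePart_refl (P : Finpartition (univ : Finset V)) (u : V) : samePart P u u :=
  samePart_iff_part_eq.2 rfl

theorem samePart_comm : samePart P u v ↔ samePart P v u := by
  simp only [samePart_iff_part_eq, eq_comm]

theorem samePart.trans (huv : samePart P u v) (hvw : samePart P v w) : samePart P u w :=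
  samePart_iff_part_eq.2 ((samePart_iff_part_eq.1 huv).trans (samePart_iff_part_eq.1 hvw))

theorem eq_of_samePart_iff (h : ∀ u v, samePart P u v ↔ samePart Q u v) : P = Q :=
  Finpartition.ext_part fun u _ => by
    ext v
    rw [← samePart_iff_mem_part, h, samePart_iff_mem_part]

end SamePart

-- The fibres of the map collapsing `p` onto `d`: the part `{d, p}` and singletons.
def pairPart (d p : V) : Finpartition (univ : Finset V) :=
  Finpartition.ofSetoid (Setoid.ker (Function.update id p d))

theorem samePart_pairPart {d p u v : V} :
    samePart (pairPart d p) u v ↔ Function.update id p d u = Function.update id p d v := by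
  rw [samePart_iff_mem_part, pairPart, Finpartition.mem_part_ofSetoid_iff_rel, Setoid.ker_def,
    eq_comm]

theorem samePart_pairPart_left {d p v : V} : samePart (pairPart d p) d v ↔ v = d ∨ v = p := by
  rw [samePart_pairPart]
  by_cases hv : v = p <;> by_cases hd : d = p <;> simp_all [eq_comm]

theorem pairPart_injective (d : V) : Function.Injective (pairPart d) := by
  have mem : ∀ p, samePart (pairPart d p) d p := fun p => samePart_pairPart_left.2 (Or.inr rfl)
  intro p q h
  have hp : p = d ∨ p = q := samePart_pairPart_left.1 (h ▸ mem p)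
  have hq : q = d ∨ q = p := samePart_pairPart_left.1 (h ▸ mem q)
  grind

theorem isISP_pairPart {G : SimpleGraph V} {d p : V} (h : ¬ G.Adj d p) :
    IsISP G (pairPart d p) := by
  intro A hA u hu v hv huv
  have := samePart_pairPart.1 ⟨A, hA, hu, hv⟩
  by_cases hup : u = p <;> by_cases hvp : v = p <;> simp_all [G.adj_comm]

def IsCompleteAwayFrom {W : Type*} (G : SimpleGraph W) (d : W) : Prop :=
  ∀ ⦃u v⦄, u ≠ d → v ≠ d → u ≠ v → G.Adj u v

section CompleteAwayFrom

variable {G : SimpleGraph V} {d : V} {P Q : Finpartition (univ : Finset V)} {u v : V}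

theorem IsISP.samePart_iff_eq (hG : IsCompleteAwayFrom G d) (hP : IsISP G P)
    (hu : u ≠ d) (hv : v ≠ d) : samePart P u v ↔ u = v := by
  refine ⟨fun ⟨A, hA, huA, hvA⟩ => ?_, fun huv => huv ▸ samePart_refl P u⟩
  by_contra huv
  exact hP A hA u huA v hvA (hG hu hv huv)

theorem IsISP.card_sub_one_le_card_parts (hG : IsCompleteAwayFrom G d) (hP : IsISP G P) :
    Fintype.card V - 1 ≤ #P.parts := by
  have hinj : Set.InjOn P.part (univ.erase d : Finset V) := fun u hu v hv huv =>
    (hP.samePart_iff_eq hG (ne_of_mem_erase hu) (ne_of_mem_erase hv)).1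
      (samePart_iff_part_eq.2 huv)
  calc Fintype.card V - 1 = #(univ.erase d) := by rw [card_erase_of_mem (mem_univ d), card_univ]
    _ ≤ #P.parts := card_le_card_of_injOn P.part (fun u _ => P.part_mem.2 (mem_univ u)) hinj

theorem IsISP.movedBy (hG : IsCompleteAwayFrom G d) (hP : IsISP G P) (hQ : IsISP G Q)
    (hPQ : P ≠ Q) : MovedBy P Q d :=
  ⟨hPQ, fun _ _ hu hv => (hP.samePart_iff_eq hG hu hv).trans (hQ.samePart_iff_eq hG hu hv).symm⟩

theorem IsISP.eq_of_samePart_left_iff (hG : IsCompleteAwayFrom G d) (hP : IsISP G P)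
    (hQ : IsISP G Q) (h : ∀ v, samePart P d v ↔ samePart Q d v) : P = Q := by
  refine eq_of_samePart_iff fun u v => ?_
  by_cases hu : u = d
  · exact hu ▸ h v
  by_cases hv : v = d
  · rw [samePart_comm, hv, h u, samePart_comm]
  rw [hP.samePart_iff_eq hG hu hv, hQ.samePart_iff_eq hG hu hv]

theorem upperBell_eq_top (hG : IsCompleteAwayFrom G d) (k : ℕ) : UpperBell G k = ⊤ := by
  ext P Q
  refine ⟨fun ⟨_, hPQ, _⟩ => fun h => hPQ (congrArg Subtype.val h), fun hPQ => ?_⟩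
  exact ⟨d, P.2.1.movedBy hG Q.2.1 fun h => hPQ (Subtype.ext h)⟩

theorem IsISP.exists_samePart_left_iff (hG : IsCompleteAwayFrom G d) (hP : IsISP G P) :
    ∃ p, ∀ v, samePart P d v ↔ v = d ∨ v = p := by
  by_cases h : ∃ p ≠ d, samePart P d p
  · obtain ⟨p, hpd, hdp⟩ := h
    refine ⟨p, fun v => ⟨fun hdv => or_iff_not_imp_left.2 fun hvd => ?_, ?_⟩⟩
    · exact (hP.samePart_iff_eq hG hvd hpd).1 ((samePart_comm.1 hdv).trans hdp)
    · rintro (rfl | rfl)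
      exacts [samePart_refl P v, hdp]
  · push Not at h
    refine ⟨d, fun v => ⟨fun hdv => Or.inl (by_contra fun hvd => h v hvd hdv), ?_⟩⟩
    rintro (rfl | rfl) <;> exact samePart_refl P v

theorem IsISP.exists_eq_pairPart (hG : IsCompleteAwayFrom G d) (hP : IsISP G P) :
    ∃ p, ¬ G.Adj d p ∧ P = pairPart d p := by
  obtain ⟨p, hp⟩ := hP.exists_samePart_left_iff hG
  have hdp : ¬ G.Adj d p := by
    obtain ⟨A, hA, hdA, hpA⟩ := (hp p).2 (Or.inr rfl)
    exact hP A hA d hdA p hpA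
  refine ⟨p, hdp, hP.eq_of_samePart_left_iff hG (isISP_pairPart hdp) fun v => ?_⟩
  rw [hp, samePart_pairPart_left]

noncomputable def nonAdjEquivUpperBell (hG : IsCompleteAwayFrom G d) {k : ℕ}
    (hk : k ≤ Fintype.card V - 1) :
    {p // ¬ G.Adj d p} ≃ {P : Finpartition (univ : Finset V) // IsISP G P ∧ k ≤ #P.parts} :=
  Equiv.ofBijective
    (fun p => ⟨pairPart d p, isISP_pairPart p.2,
      hk.trans ((isISP_pairPart p.2).card_sub_one_le_card_parts hG)⟩)
    ⟨fun p q h => Subtype.ext (pairPart_injective d (congrArg Subtype.val h)), fun P => by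
      obtain ⟨p, hp, hP⟩ := P.2.1.exists_eq_pairPart hG
      exact ⟨⟨p, hp⟩, Subtype.ext hP.symm⟩⟩

end CompleteAwayFrom

section UniversalVertices

variable {U W : Type*} {G : SimpleGraph U} {H : SimpleGraph W}
  (e : G.induce {v | ¬ IsUniversal G v} ≃g H)

theorem isCompleteAwayFrom_of_iso {c : W} (hH : IsCompleteAwayFrom H c) :
    IsCompleteAwayFrom G (e.symm c) := by
  intro u v hu hv huv
  by_cases hu' : IsUniversal G u
  · exact hu' v (Ne.symm huv)
  by_cases hv' : IsUniversal G v
  · exact (hv' u huv).symm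
  refine (e.map_adj_iff (v := ⟨u, hu'⟩) (w := ⟨v, hv'⟩)).1 (hH ?_ ?_ ?_)
  · exact fun h => hu (by simp [← h])
  · exact fun h => hv (by simp [← h])
  · exact fun h => huv (congrArg Subtype.val (e.injective h))

theorem not_isUniversal_of_not_adj {v p : U} (hv : ¬ IsUniversal G v) (h : ¬ G.Adj v p) :
    ¬ IsUniversal G p :=
  fun hp => h (hp v fun hvp => hv (hvp ▸ hp)).symm

def nonAdjEquivOfIso (c : W) : {i // ¬ H.Adj c i} ≃ {p // ¬ G.Adj (e.symm c) p} where
  toFun i := ⟨e.symm i, fun h => i.2 (e.symm.map_adj_iff.1 h)⟩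
  invFun p := ⟨e ⟨p, not_isUniversal_of_not_adj (e.symm c).2 p.2⟩,
    fun h => p.2 (by simpa using e.symm.map_adj_iff.2 h)⟩
  left_inv i := by simp
  right_inv p := by simp

end UniversalVertices

theorem stmt17 (G : SimpleGraph V) (k : ℕ)
    (hiso : Nonempty ((SimpleGraph.induce {v : V | ¬ IsUniversal G v} G) ≃g K3plusK1))
    (hk : k ≤ Fintype.card V - 1) :
    Nonempty (UpperBell G k ≃g (⊤ : SimpleGraph (Fin 4))) := by
  obtain ⟨e⟩ := hiso
  have hG : IsCompleteAwayFrom G (e.symm 3) :=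
    isCompleteAwayFrom_of_iso e fun _ _ hu hv huv => ⟨huv, hu, hv⟩
  have hK : ∀ i, ¬ K3plusK1.Adj 3 i := fun _ h => h.2.1 rfl
  rw [upperBell_eq_top hG]
  exact ⟨(SimpleGraph.Iso.completeGraph ((Equiv.subtypeUnivEquiv hK).symm.trans
    ((nonAdjEquivOfIso e 3).trans (nonAdjEquivUpperBell hG hk)))).symm⟩
end

section
/- Let G be a graph on n vertices with k ≤ n, and suppose that the complement of G contains two edges (non-edges of G) {u,v} and {w,x} with {u,v} ∩ {w,x} = ∅, and that k ≤ n − 2. Then the graph B_{≥k}(G) has no universal vertex. -/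
/-!
Given `P`, let `Q` be the partition into singletons except that `u, v` share a block exactly when
they do not in `P`, and likewise `w, x`. As `{u, v}` and `{w, x}` are non-edges, `Q` is a colouring;
it has at least `n - 2` blocks, so it lies in `B_{≥k}(G)`. Moving one vertex changes the
"same block" relation only on pairs containing that vertex, so it cannot change it on both of the
disjoint pairs `{u, v}` and `{w, x}`: `Q` is not adjacent to `P`.
-/

open Finset

variable {V : Type*} [Fintype V] [DecidableEq V]

lemma samePart_iff_mem_part_s19 (P : Finpartition (univ : Finset V)) (a b : V) :
    samePart P a b ↔ b ∈ P.part a := by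
  constructor
  · rintro ⟨A, hA, haA, hbA⟩
    rwa [P.part_eq_of_mem hA haA]
  · exact fun h => ⟨P.part a, P.part_mem.2 (mem_univ a), P.mem_part (mem_univ a), h⟩

lemma isISP_of_samePart {G : SimpleGraph V} {P : Finpartition (univ : Finset V)}
    (h : ∀ a b, samePart P a b → ¬ G.Adj a b) : IsISP G P :=
  fun A hA a ha b hb => h a b ⟨A, hA, ha, hb⟩

lemma MovedBy.eq_or_eq_of_not_samePart_iff {P Q : Finpartition (univ : Finset V)} {y a b : V}
    (hy : MovedBy P Q y) (h : ¬ (samePart P a b ↔ samePart Q a b)) : y = a ∨ y = b := by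
  by_contra! hne
  exact h (hy.2 a b hne.1.symm hne.2.symm)

lemma not_movedBy_of_not_samePart_iff {P Q : Finpartition (univ : Finset V)} {u v w x : V}
    (d1 : u ≠ w) (d2 : u ≠ x) (d3 : v ≠ w) (d4 : v ≠ x)
    (huv : ¬ (samePart P u v ↔ samePart Q u v)) (hwx : ¬ (samePart P w x ↔ samePart Q w x))
    (y : V) : ¬ MovedBy P Q y := by
  intro hy
  rcases hy.eq_or_eq_of_not_samePart_iff huv with rfl | rfl <;>
    rcases hy.eq_or_eq_of_not_samePart_iff hwx with h | h <;> contradiction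

namespace SimpleGraph

section Matching

variable {α : Type*} (M : SimpleGraph α) (hM : ∀ ⦃a b c⦄, M.Adj a b → M.Adj a c → b = c)

def matchingSetoid : Setoid α where
  r a b := a = b ∨ M.Adj a b
  iseqv :=
    { refl := fun _ => Or.inl rfl
      symm := by
        rintro a b (rfl | hab)
        exacts [Or.inl rfl, Or.inr hab.symm]
      trans := by
        rintro a b c (rfl | hab) (rfl | hbc)
        exacts [Or.inl rfl, Or.inr hbc, Or.inr hab, Or.inl (hM hab.symm hbc)] }

variable [Fintype α] [DecidableEq α]

open Classical in
noncomputable def matchingPartition : Finpartition (univ : Finset α) :=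
  Finpartition.ofSetoid (M.matchingSetoid hM)

lemma samePart_matchingPartition (a b : α) :
    samePart (M.matchingPartition hM) a b ↔ a = b ∨ M.Adj a b := by
  classical
  rw [samePart_iff_mem_part_s19, matchingPartition]
  exact Finpartition.mem_part_ofSetoid_iff_rel (s := M.matchingSetoid hM)

lemma isISP_matchingPartition {G : SimpleGraph α}
    (hMG : ∀ ⦃a b⦄, M.Adj a b → ¬ G.Adj a b) :
    IsISP G (M.matchingPartition hM) := by
  refine isISP_of_samePart fun a b hab => ?_
  rcases (M.samePart_matchingPartition hM a b).1 hab with rfl | hadj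
  exacts [G.irrefl, hMG hadj]

/-- Distinct vertices outside a vertex cover `S` of `M` lie in distinct blocks. -/
lemma card_sub_card_le_card_parts_matchingPartition (S : Finset α)
    (hS : ∀ ⦃a b⦄, M.Adj a b → a ∈ S ∨ b ∈ S) :
    Fintype.card α - #S ≤ #(M.matchingPartition hM).parts := by
  set Q := M.matchingPartition hM
  have hinj : Set.InjOn Q.part ↑(univ \ S) := by
    intro a ha b hb hab
    have : samePart Q a b := by rw [samePart_iff_mem_part_s19, hab]; exact Q.mem_part (mem_univ b)
    rcases (M.samePart_matchingPartition hM a b).1 this with rfl | hadj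
    · rfl
    · simp only [coe_sdiff, coe_univ, Set.mem_sdiff, Set.mem_univ, true_and, mem_coe] at ha hb
      exact ((hS hadj).resolve_left ha |> hb).elim
  calc Fintype.card α - #S = #(univ \ S) := by rw [card_sdiff_of_subset (subset_univ S), card_univ]
    _ ≤ #Q.parts := card_le_card_of_injOn Q.part (fun a _ => Q.part_mem.2 (mem_univ a)) hinj

end Matching

section TwoEdges

variable {α : Type*} {p q : Prop} {u v w x : α}

def twoEdges (p q : Prop) (u v w x : α) : SimpleGraph α :=
  fromEdgeSet {e | (p ∧ e = s(u, v)) ∨ (q ∧ e = s(w, x))}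

lemma twoEdges_adj {a b : α} :
    (twoEdges p q u v w x).Adj a b ↔
      ((p ∧ s(a, b) = s(u, v)) ∨ (q ∧ s(a, b) = s(w, x))) ∧ a ≠ b :=
  fromEdgeSet_adj _

lemma twoEdges_adj_left (huv : u ≠ v) (d1 : u ≠ w) (d2 : u ≠ x) :
    (twoEdges p q u v w x).Adj u v ↔ p := by
  simp [twoEdges_adj, huv, d1, d2]

lemma twoEdges_adj_right (hwx : w ≠ x) (d1 : u ≠ w) (d3 : v ≠ w) :
    (twoEdges p q u v w x).Adj w x ↔ q := by
  simp [twoEdges_adj, hwx, d1.symm, d3.symm]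

lemma twoEdges_eq_of_adj_of_adj (d1 : u ≠ w) (d2 : u ≠ x) (d3 : v ≠ w) (d4 : v ≠ x)
    {a b c : α} (hab : (twoEdges p q u v w x).Adj a b) (hac : (twoEdges p q u v w x).Adj a c) :
    b = c := by
  grind [twoEdges_adj, Sym2.eq_iff]

lemma twoEdges_adj_mem_or_mem [DecidableEq α] {a b : α} (h : (twoEdges p q u v w x).Adj a b) :
    a ∈ ({v, x} : Finset α) ∨ b ∈ ({v, x} : Finset α) := by
  grind [twoEdges_adj, Sym2.eq_iff]

lemma not_adj_of_twoEdges_adj {G : SimpleGraph α} (e1 : ¬ G.Adj u v) (e2 : ¬ G.Adj w x)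
    {a b : α} (h : (twoEdges p q u v w x).Adj a b) : ¬ G.Adj a b := by
  grind [twoEdges_adj, Sym2.eq_iff, SimpleGraph.adj_comm]

end TwoEdges

end SimpleGraph

theorem stmt19_general (G : SimpleGraph V) (k : ℕ)
    (u v w x : V) (huv : u ≠ v) (hwx : w ≠ x)
    (e1 : ¬ G.Adj u v) (e2 : ¬ G.Adj w x)
    (d1 : u ≠ w) (d2 : u ≠ x) (d3 : v ≠ w) (d4 : v ≠ x)
    (hk2 : k ≤ Fintype.card V - 2) :
    ∀ P : {P : Finpartition (univ : Finset V) // IsISP G P ∧ k ≤ P.parts.card},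
      ∃ Q, Q ≠ P ∧ ¬ (UpperBell G k).Adj P Q := by
  intro P
  set M := SimpleGraph.twoEdges (¬ samePart P.1 u v) (¬ samePart P.1 w x) u v w x
  have hM : ∀ ⦃a b c⦄, M.Adj a b → M.Adj a c → b = c := fun _ _ _ =>
    SimpleGraph.twoEdges_eq_of_adj_of_adj d1 d2 d3 d4
  set Q := M.matchingPartition hM
  have hQuv : ¬ (samePart P.1 u v ↔ samePart Q u v) := fun h => iff_not_self <| h.trans <| by
    rw [M.samePart_matchingPartition hM, SimpleGraph.twoEdges_adj_left huv d1 d2, or_iff_right huv]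
  have hQwx : ¬ (samePart P.1 w x ↔ samePart Q w x) := fun h => iff_not_self <| h.trans <| by
    rw [M.samePart_matchingPartition hM, SimpleGraph.twoEdges_adj_right hwx d1 d3, or_iff_right hwx]
  have hQcard : k ≤ #Q.parts := calc
    k ≤ Fintype.card V - #{v, x} := by rwa [card_pair d4]
    _ ≤ #Q.parts := M.card_sub_card_le_card_parts_matchingPartition hM _
      fun _ _ => SimpleGraph.twoEdges_adj_mem_or_mem
  have hQ : IsISP G Q := M.isISP_matchingPartition hM fun _ _ =>
    SimpleGraph.not_adj_of_twoEdges_adj e1 e2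
  refine ⟨⟨Q, hQ, hQcard⟩, fun h => hQuv (by rw [← congrArg Subtype.val h]), ?_⟩
  rintro ⟨y, hy⟩
  exact not_movedBy_of_not_samePart_iff d1 d2 d3 d4 hQuv hQwx y hy

theorem stmt19 (G : SimpleGraph V) (k : ℕ) (hk : k ≤ Fintype.card V)
    (u v w x : V) (huv : u ≠ v) (hwx : w ≠ x)
    (e1 : ¬ G.Adj u v) (e2 : ¬ G.Adj w x)
    (d1 : u ≠ w) (d2 : u ≠ x) (d3 : v ≠ w) (d4 : v ≠ x)
    (hk2 : k ≤ Fintype.card V - 2) :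
    ∀ P : {P : Finpartition (univ : Finset V) // IsISP G P ∧ k ≤ P.parts.card},
      ∃ Q, Q ≠ P ∧ ¬ (UpperBell G k).Adj P Q :=
  stmt19_general G k u v w x huv hwx e1 e2 d1 d2 d3 d4 hk2
end
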